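/- Fix an alphabet Σ and coalgebras γ : X → Set (Unit ⊕ Σ × X), δ : Y → Set (Unit ⊕ Σ × Y) (labelled transition systems with explicit termination). With the monad M X = Set (List Σ × (X ⊕ Unit)), unit η_X(x) = {([], Sum.inl x)}, Kleisli extension f*(S) = {(u ++ v, b) | ∃ x, (u, Sum.inl x) ∈ S ∧ (v, b) ∈ f x} ∪ {(u, Sum.inr ⋆) | (u, Sum.inr ⋆) ∈ S}, trace semantics α_X(S) = {([], Sum.inr ⋆) | Sum.inl ⋆ ∈ S} ∪ {([a], Sum.inl x) | Sum.inr (a, x) ∈ S}, and iterates γ^(0) = η_X, γ^(n+1) = (α_X ∘ γ)* ∘ γ^(n): two states x ∈ X and y ∈ Y are α-trace equivalent (their α-trace sequences (M(!)(γ^(n)(x)))_n and (M(!)(δ^(n)(y)))_n coincide) if and only if {u | ∃ z, x →^u z} = {u | ∃ z, y →^u z} and {u | ∃ z, x →^u z ∧ Sum.inl ⋆ ∈ γ(z)} = {u | ∃ z, y →^u z ∧ Sum.inl ⋆ ∈ δ(z)}; i.e. x and y have the same plain traces and the same accepted traces. -/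
import Mathlib


variable {A : Type*}

/-- Unit of the monad `M X = Set (List A × (X ⊕ Unit))`. -/
def tEta {X : Type*} (x : X) : Set (List A × (X ⊕ Unit)) := {([], Sum.inl x)}

/-- Kleisli extension for `M X = Set (List A × (X ⊕ Unit))`. -/
def tStar {X Y : Type*} (f : X → Set (List A × (Y ⊕ Unit)))
    (S : Set (List A × (X ⊕ Unit))) : Set (List A × (Y ⊕ Unit)) :=
  {p | ∃ u v x b, p = (u ++ v, b) ∧ (u, Sum.inl x) ∈ S ∧ (v, b) ∈ f x} ∪
  {p | ∃ u, p = (u, Sum.inr ()) ∧ (u, Sum.inr ()) ∈ S}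

/-- Trace semantics for LTS with explicit termination. -/
def tAlpha {X : Type*} (S : Set (Unit ⊕ A × X)) : Set (List A × (X ⊕ Unit)) :=
  {p | p = ([], Sum.inr ()) ∧ Sum.inl () ∈ S} ∪
  {p | ∃ a x, p = ([a], Sum.inl x) ∧ Sum.inr (a, x) ∈ S}

/-- Iterates `γ⁽⁰⁾ = η`, `γ⁽ⁿ⁺¹⁾ = (α ∘ γ)* ∘ γ⁽ⁿ⁾`. -/
def tIter {X : Type*} (γ : X → Set (Unit ⊕ A × X)) :
    ℕ → X → Set (List A × (X ⊕ Unit))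
  | 0 => tEta
  | n + 1 => tStar (tAlpha ∘ γ) ∘ tIter γ n

/-- `M(!)`: collapse the live-state component to a one-element type. -/
def tBang {X : Type*} (S : Set (List A × (X ⊕ Unit))) :
    Set (List A × (PUnit ⊕ Unit)) :=
  (fun p => (p.1, Sum.map (fun _ => PUnit.unit) id p.2)) '' S

/-- Extended transition relation of an LTS with explicit termination. -/
inductive TSteps {X : Type*} (γ : X → Set (Unit ⊕ A × X)) : X → List A → X → Prop
  | nil (x : X) : TSteps γ x [] x
  | cons {x w z : X} {a : A} {u : List A} :
      Sum.inr (a, w) ∈ γ x → TSteps γ w u z → TSteps γ x (a :: u) z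

lemma tsteps_snoc {X : Type*} {γ : X → Set (Unit ⊕ A × X)} {x w z : X} {u : List A} {a : A}
    (h : TSteps γ x u w) (hs : Sum.inr (a, z) ∈ γ w) : TSteps γ x (u ++ [a]) z := by
  induction h with
  | nil => exact TSteps.cons hs (TSteps.nil _)
  | cons h1 _ ih => exact TSteps.cons h1 (ih hs)

lemma tsteps_snoc_inv {X : Type*} {γ : X → Set (Unit ⊕ A × X)} {z : X} {a : A} :
    ∀ {u : List A} {x : X}, TSteps γ x (u ++ [a]) z →
      ∃ w, TSteps γ x u w ∧ Sum.inr (a, z) ∈ γ w := by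
  intro u
  induction u with
  | nil =>
    intro x h
    cases h with
    | cons h1 h2 => cases h2; exact ⟨x, TSteps.nil x, h1⟩
  | cons b u ih =>
    intro x h
    cases h with
    | cons h1 h2 =>
      obtain ⟨w, hw, hs⟩ := ih h2
      exact ⟨w, TSteps.cons h1 hw, hs⟩

lemma mem_iter {X : Type*} (γ : X → Set (Unit ⊕ A × X)) (n : ℕ) (x : X) :
    (∀ (u : List A) (z : X), ((u, Sum.inl z) ∈ tIter γ n x ↔ TSteps γ x u z ∧ u.length = n)) ∧
    (∀ u : List A, ((u, Sum.inr ()) ∈ tIter γ n x ↔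
      ∃ z, TSteps γ x u z ∧ Sum.inl () ∈ γ z ∧ u.length < n)) := by
  induction n with
  | zero =>
    constructor
    · intro u z
      constructor
      · intro h
        rw [show tIter γ 0 x = tEta x from rfl, tEta, Set.mem_singleton_iff] at h
        obtain ⟨h1, h2⟩ := Prod.mk.injEq .. ▸ h
        cases h2
        exact ⟨h1 ▸ TSteps.nil x, by simp [h1]⟩
      · rintro ⟨h, hl⟩
        cases u with
        | nil => cases h; rfl
        | cons a u => simp at hl
    · intro u
      constructor
      · intro h
        rw [show tIter γ 0 x = tEta x from rfl, tEta, Set.mem_singleton_iff] at h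
        simp at h
      · rintro ⟨z, _, _, hl⟩; omega
  | succ n ih =>
    obtain ⟨ihl, ihr⟩ := ih
    have hmem : tIter γ (n+1) x = tStar (tAlpha ∘ γ) (tIter γ n x) := rfl
    constructor
    · intro u z
      rw [hmem]
      constructor
      · intro h
        rcases h with ⟨u', v, w, b, heq, h1, h2⟩ | ⟨u', heq, _⟩
        · obtain ⟨he1, he2⟩ := Prod.mk.injEq .. ▸ heq
          subst he2
          rcases h2 with ⟨h2, _⟩ | ⟨a, x', h2, hs⟩
          · simp at h2
          · obtain ⟨hv, hx⟩ := Prod.mk.injEq .. ▸ h2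
            cases Sum.inl.inj hx
            obtain ⟨hw, hn⟩ := (ihl u' w).1 h1
            subst he1 hv
            exact ⟨tsteps_snoc hw hs, by simp [hn]⟩
        · simp [Prod.mk.injEq] at heq
      · rintro ⟨h, hl⟩
        have : u ≠ [] := by intro h'; subst h'; simp at hl
        obtain rfl | ⟨u', a, rfl⟩ := u.eq_nil_or_concat'
        · exact absurd rfl this
        obtain ⟨w, hw, hs⟩ := tsteps_snoc_inv h
        left
        exact ⟨u', [a], w, Sum.inl z, rfl, (ihl u' w).2 ⟨hw, by simpa using hl⟩,
          Or.inr ⟨a, z, rfl, hs⟩⟩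
    · intro u
      rw [hmem]
      constructor
      · intro h
        rcases h with ⟨u', v, w, b, heq, h1, h2⟩ | ⟨u', heq, h1⟩
        · obtain ⟨he1, he2⟩ := Prod.mk.injEq .. ▸ heq
          subst he2
          rcases h2 with ⟨h2, hacc⟩ | ⟨a, x', h2, _⟩
          · obtain ⟨hv, _⟩ := Prod.mk.injEq .. ▸ h2
            subst hv
            simp only [List.append_nil] at he1
            subst he1
            obtain ⟨hw, hn⟩ := (ihl u w).1 h1
            exact ⟨w, hw, hacc, by omega⟩
          · obtain ⟨_, hx⟩ := Prod.mk.injEq .. ▸ h2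
            simp at hx
        · obtain ⟨he1, _⟩ := Prod.mk.injEq .. ▸ heq
          subst he1
          obtain ⟨z, hz, hacc, hn⟩ := (ihr u).1 h1
          exact ⟨z, hz, hacc, by omega⟩
      · rintro ⟨z, hz, hacc, hn⟩
        rcases Nat.lt_succ_iff_lt_or_eq.1 hn with hn | hn
        · exact Or.inr ⟨u, rfl, (ihr u).2 ⟨z, hz, hacc, hn⟩⟩
        · exact Or.inl ⟨u, [], z, Sum.inr (), by simp, (ihl u z).2 ⟨hz, hn⟩,
            Or.inl ⟨rfl, hacc⟩⟩

lemma mem_tBang_inl {X : Type*} (S : Set (List A × (X ⊕ Unit))) (u : List A) :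
    (u, Sum.inl PUnit.unit) ∈ tBang S ↔ ∃ z, (u, Sum.inl z) ∈ S := by
  constructor
  · rintro ⟨⟨u', b⟩, hmem, heq⟩
    obtain ⟨h1, h2⟩ := Prod.mk.injEq .. ▸ heq
    subst h1
    cases b with
    | inl z => exact ⟨z, hmem⟩
    | inr u'' => simp [Sum.map] at h2
  · rintro ⟨z, hz⟩
    exact ⟨(u, Sum.inl z), hz, rfl⟩

lemma mem_tBang_inr {X : Type*} (S : Set (List A × (X ⊕ Unit))) (u : List A) :
    (u, Sum.inr ()) ∈ tBang S ↔ (u, Sum.inr ()) ∈ S := by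
  constructor
  · rintro ⟨⟨u', b⟩, hmem, heq⟩
    obtain ⟨h1, h2⟩ := Prod.mk.injEq .. ▸ heq
    subst h1
    cases b with
    | inl z => simp [Sum.map] at h2
    | inr u'' => exact hmem
  · intro h
    exact ⟨(u, Sum.inr ()), h, rfl⟩

/-- two states of LTSs with explicit termination are `α`-trace
equivalent iff they have the same plain traces and the same accepted traces. -/
theorem stmt8 {X Y : Type*} (γ : X → Set (Unit ⊕ A × X))
    (δ : Y → Set (Unit ⊕ A × Y)) (x : X) (y : Y) :
    (∀ n, tBang (tIter γ n x) = tBang (tIter δ n y)) ↔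
      ({u : List A | ∃ z, TSteps γ x u z} = {u : List A | ∃ z, TSteps δ y u z} ∧
       {u : List A | ∃ z, TSteps γ x u z ∧ Sum.inl () ∈ γ z} =
         {u : List A | ∃ z, TSteps δ y u z ∧ Sum.inl () ∈ δ z}) := by
  constructor
  · intro H
    constructor
    · ext u
      simp only [Set.mem_setOf_eq]
      constructor
      · rintro ⟨z, hz⟩
        have : (u, Sum.inl PUnit.unit) ∈ tBang (tIter γ u.length x) :=
          (mem_tBang_inl _ u).2 ⟨z, ((mem_iter γ u.length x).1 u z).2 ⟨hz, rfl⟩⟩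
        rw [H u.length] at this
        obtain ⟨z', hz'⟩ := (mem_tBang_inl _ u).1 this
        exact ⟨z', (((mem_iter δ u.length y).1 u z').1 hz').1⟩
      · rintro ⟨z, hz⟩
        have : (u, Sum.inl PUnit.unit) ∈ tBang (tIter δ u.length y) :=
          (mem_tBang_inl _ u).2 ⟨z, ((mem_iter δ u.length y).1 u z).2 ⟨hz, rfl⟩⟩
        rw [← H u.length] at this
        obtain ⟨z', hz'⟩ := (mem_tBang_inl _ u).1 this
        exact ⟨z', (((mem_iter γ u.length x).1 u z').1 hz').1⟩
    · ext u
      simp only [Set.mem_setOf_eq]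
      constructor
      · rintro ⟨z, hz, hacc⟩
        have : (u, Sum.inr ()) ∈ tBang (tIter γ (u.length + 1) x) :=
          (mem_tBang_inr _ u).2 (((mem_iter γ (u.length + 1) x).2 u).2
            ⟨z, hz, hacc, Nat.lt_succ_self _⟩)
        rw [H (u.length + 1)] at this
        obtain ⟨z', h1, h2, _⟩ := ((mem_iter δ (u.length + 1) y).2 u).1
          ((mem_tBang_inr _ u).1 this)
        exact ⟨z', h1, h2⟩
      · rintro ⟨z, hz, hacc⟩
        have : (u, Sum.inr ()) ∈ tBang (tIter δ (u.length + 1) y) :=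
          (mem_tBang_inr _ u).2 (((mem_iter δ (u.length + 1) y).2 u).2
            ⟨z, hz, hacc, Nat.lt_succ_self _⟩)
        rw [← H (u.length + 1)] at this
        obtain ⟨z', h1, h2, _⟩ := ((mem_iter γ (u.length + 1) x).2 u).1
          ((mem_tBang_inr _ u).1 this)
        exact ⟨z', h1, h2⟩
  · rintro ⟨h1, h2⟩ n
    ext ⟨u, b⟩
    have hp1 : ∀ u : List A, (∃ z, TSteps γ x u z) ↔ ∃ z, TSteps δ y u z := by
      intro u; exact Set.ext_iff.1 h1 u
    have hp2 : ∀ u : List A,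
        (∃ z, TSteps γ x u z ∧ Sum.inl () ∈ γ z) ↔
          ∃ z, TSteps δ y u z ∧ Sum.inl () ∈ δ z := by
      intro u; exact Set.ext_iff.1 h2 u
    cases b with
    | inl p =>
      cases p
      rw [mem_tBang_inl, mem_tBang_inl]
      constructor
      · rintro ⟨z, hz⟩
        obtain ⟨hs, hn⟩ := ((mem_iter γ n x).1 u z).1 hz
        obtain ⟨z', hz'⟩ := (hp1 u).1 ⟨z, hs⟩
        exact ⟨z', ((mem_iter δ n y).1 u z').2 ⟨hz', hn⟩⟩
      · rintro ⟨z, hz⟩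
        obtain ⟨hs, hn⟩ := ((mem_iter δ n y).1 u z).1 hz
        obtain ⟨z', hz'⟩ := (hp1 u).2 ⟨z, hs⟩
        exact ⟨z', ((mem_iter γ n x).1 u z').2 ⟨hz', hn⟩⟩
    | inr q =>
      cases q
      rw [mem_tBang_inr, mem_tBang_inr]
      constructor
      · intro h
        obtain ⟨z, hs, hacc, hn⟩ := ((mem_iter γ n x).2 u).1 h
        obtain ⟨z', hs', hacc'⟩ := (hp2 u).1 ⟨z, hs, hacc⟩
        exact ((mem_iter δ n y).2 u).2 ⟨z', hs', hacc', hn⟩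
      · intro h
        obtain ⟨z, hs, hacc, hn⟩ := ((mem_iter δ n y).2 u).1 h
        obtain ⟨z', hs', hacc'⟩ := (hp2 u).2 ⟨z, hs, hacc⟩
        exact ((mem_iter γ n x).2 u).2 ⟨z', hs', hacc', hn⟩
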